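/- Let ψ : Γ → Γ' be a surjective group homomorphism whose kernel K is amenable, meaning that there exists a linear functional m on the real vector space of bounded functions f : K → ℝ such that m(1) = 1, m(f) ≥ 0 whenever f ≥ 0 pointwise, and m(k·f) = m(f) for all k ∈ K and all bounded f, where (k·f)(x) = f(k⁻¹x). Then for every n ≥ 1 the induced map ψ^* : H^n_b(Γ') → H^n_b(Γ) carries N^n_0(Γ') into N^n_0(Γ) and restricts to an injection N^n_0(Γ') ↪ N^n_0(Γ). -/

import Mathlib

/-!
Pulling back along `ψ` cannot increase `‖·‖_S`: an invariant primitive on `Γ'` vanishing on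
`ψ(S)^n` pulls back to an invariant primitive on `Γ` vanishing on `S^n` whose coboundary has
no larger sup-norm. Hence `ψ^*` maps `N^n_0(Γ')` into `N^n_0(Γ)`.

In fact `ψ^*` is injective on all of `H^n_b(Γ')`. Fix a set-theoretic section `s` of `ψ` and an
invariant mean on `K = ker ψ`. Averaging a cochain `φ` on `Γ` over all lifts `s (y i) * k i` of a
simplex `y` of `Γ'`, with the iterated mean on `K^{n+1}`, defines a transfer to `Γ'`. It is a
left inverse of the pullback, and it preserves boundedness and invariance (a change of section
is a translation in `K^{n+1}`). It commutes with `δ`, because the iterated mean of a function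
of fewer coordinates is its mean over those coordinates. So a bounded invariant primitive of
`ψ^* z` transfers to one of `z`.
-/
set_option linter.unusedSectionVars false
set_option linter.unusedVariables false

open scoped ENNReal

namespace BddCoh

variable (G : Type*) [Group G]

/-- Homogeneous real `n`-cochains on `G`: functions `G^{n+1} → ℝ`. -/
abbrev Cochain (n : ℕ) : Type _ := (Fin (n + 1) → G) → ℝ

variable {G}

/-- Invariance of a homogeneous cochain under the diagonal left translation action. -/
def IsInvariant {n : ℕ} (φ : Cochain G n) : Prop :=
  ∀ (g : G) (x : Fin (n + 1) → G), φ (fun i => g * x i) = φ x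

/-- Boundedness of a cochain. -/
def IsBoundedC {n : ℕ} (φ : Cochain G n) : Prop :=
  ∃ C : ℝ, ∀ x, |φ x| ≤ C

/-- The sup-norm of a cochain, valued in `[0,∞]`. -/
noncomputable def snorm {n : ℕ} (φ : Cochain G n) : ℝ≥0∞ :=
  ⨆ x : Fin (n + 1) → G, ENNReal.ofReal |φ x|

/-- The homogeneous differential. -/
noncomputable def delta {n : ℕ} : Cochain G n →ₗ[ℝ] Cochain G (n + 1) where
  toFun φ := fun x => ∑ i : Fin (n + 2), (-1 : ℝ) ^ (i : ℕ) * φ (fun j => x (i.succAbove j))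
  map_add' φ ψ := by
    funext x
    simp [mul_add, Finset.sum_add_distrib]
  map_smul' c φ := by
    funext x
    simp only [Pi.smul_apply, smul_eq_mul, RingHom.id_apply]
    rw [Finset.mul_sum]
    exact Finset.sum_congr rfl fun i _ => by ring

lemma IsInvariant.add {n : ℕ} {φ ψ : Cochain G n} (h1 : IsInvariant φ) (h2 : IsInvariant ψ) :
    IsInvariant (φ + ψ) := fun g x => by
  simp only [Pi.add_apply, h1 g x, h2 g x]

lemma IsInvariant.smul {n : ℕ} (c : ℝ) {φ : Cochain G n} (h : IsInvariant φ) :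
    IsInvariant (c • φ) := fun g x => by
  simp only [Pi.smul_apply, h g x]

lemma IsInvariant.zero {n : ℕ} : IsInvariant (0 : Cochain G n) := fun _ _ => rfl

lemma IsBoundedC.add {n : ℕ} {φ ψ : Cochain G n} : IsBoundedC φ → IsBoundedC ψ →
    IsBoundedC (φ + ψ)
  | ⟨C, hC⟩, ⟨D, hD⟩ => ⟨C + D, fun x => (abs_add_le (φ x) (ψ x)).trans (add_le_add (hC x) (hD x))⟩

lemma IsBoundedC.smul {n : ℕ} (c : ℝ) {φ : Cochain G n} : IsBoundedC φ → IsBoundedC (c • φ)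
  | ⟨C, hC⟩ => ⟨|c| * C, fun x => by
      have h : |(c • φ) x| = |c| * |φ x| := by
        simp [abs_mul]
      rw [h]
      exact mul_le_mul_of_nonneg_left (hC x) (abs_nonneg c)⟩

lemma IsBoundedC.zero {n : ℕ} : IsBoundedC (0 : Cochain G n) := ⟨0, fun x => by simp⟩

variable (G)

/-- The bounded invariant cocycles in degree `n`. -/
noncomputable def Zb (n : ℕ) : Submodule ℝ (Cochain G n) where
  carrier := {z | IsBoundedC z ∧ IsInvariant z ∧ delta z = 0}
  add_mem' := by
    rintro a b ⟨hba, hia, hda⟩ ⟨hbb, hib, hdb⟩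
    exact ⟨hba.add hbb, hia.add hib, by rw [map_add, hda, hdb, add_zero]⟩
  zero_mem' := ⟨IsBoundedC.zero, IsInvariant.zero, map_zero _⟩
  smul_mem' := by
    rintro c a ⟨hb, hi, hd⟩
    exact ⟨hb.smul c, hi.smul c, by rw [map_smul, hd, smul_zero]⟩

variable {G}

/-- Being the coboundary of a bounded invariant cochain (with the convention `C^{-1} = 0`). -/
def IsCobdry : ∀ {n : ℕ}, Cochain G n → Prop
  | 0, ψ => ψ = 0
  | n + 1, ψ => ∃ φ : Cochain G n, IsBoundedC φ ∧ IsInvariant φ ∧ delta φ = ψ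

lemma IsCobdry.add : ∀ {n : ℕ} {a b : Cochain G n}, IsCobdry a → IsCobdry b → IsCobdry (a + b)
  | 0, a, b, ha, hb => by
      show a + b = 0
      rw [show a = 0 from ha, show b = 0 from hb, add_zero]
  | n + 1, a, b, ⟨φ, h1, h2, h3⟩, ⟨ψ, g1, g2, g3⟩ =>
      ⟨φ + ψ, h1.add g1, h2.add g2, by rw [map_add, h3, g3]⟩

lemma IsCobdry.smul : ∀ {n : ℕ} (c : ℝ) {a : Cochain G n}, IsCobdry a → IsCobdry (c • a)
  | 0, c, a, ha => by
      show c • a = 0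
      rw [show a = 0 from ha, smul_zero]
  | n + 1, c, a, ⟨φ, h1, h2, h3⟩ => ⟨c • φ, h1.smul c, h2.smul c, by rw [map_smul, h3]⟩

lemma IsCobdry.zero : ∀ {n : ℕ}, IsCobdry (0 : Cochain G n)
  | 0 => rfl
  | n + 1 => ⟨0, IsBoundedC.zero, IsInvariant.zero, map_zero _⟩

variable (G)

/-- The coboundaries, as a submodule of the cocycles. -/
noncomputable def Bb (n : ℕ) : Submodule ℝ (Zb G n) where
  carrier := {z | IsCobdry (z : Cochain G n)}
  add_mem' := by
    intro a b ha hb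
    show IsCobdry ((a + b : Zb G n) : Cochain G n)
    rw [Submodule.coe_add]
    exact ha.add hb
  zero_mem' := by
    show IsCobdry ((0 : Zb G n) : Cochain G n)
    rw [ZeroMemClass.coe_zero]
    exact IsCobdry.zero
  smul_mem' := by
    intro c a ha
    show IsCobdry ((c • a : Zb G n) : Cochain G n)
    rw [Submodule.coe_smul]
    exact ha.smul c

/-- Bounded cohomology of `G` in degree `n` (with trivial real coefficients), computed from
the complex of bounded invariant homogeneous cochains. -/
abbrev Hb (n : ℕ) := Zb G n ⧸ Bb G n

variable {G}

/-- The bounded cohomology class of a bounded invariant cocycle. -/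
noncomputable abbrev mkH {n : ℕ} (z : Zb G n) : Hb G n := (Bb G n).mkQ z

lemma mkH_zero {n : ℕ} : mkH (0 : Zb G n) = 0 := map_zero (Bb G n).mkQ

lemma mkH_add {n : ℕ} (y z : Zb G n) : mkH (y + z) = mkH y + mkH z := map_add (Bb G n).mkQ y z

lemma mkH_smul {n : ℕ} (c : ℝ) (z : Zb G n) : mkH (c • z) = c • mkH z :=
  map_smul (Bb G n).mkQ c z

/-- The Gromov seminorm (canonical `ℓ^∞`-seminorm) on bounded cohomology, in `[0,∞]`. -/
noncomputable def gnorm {n : ℕ} (α : Hb G n) : ℝ≥0∞ :=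
  sInf {r | ∃ z : Zb G n, mkH z = α ∧ snorm (z : Cochain G n) = r}

lemma snorm_zero {n : ℕ} : snorm (0 : Cochain G n) = 0 :=
  le_antisymm (iSup_le fun x => by simp) zero_le

lemma snorm_add_le {n : ℕ} (φ ψ : Cochain G n) : snorm (φ + ψ) ≤ snorm φ + snorm ψ := by
  refine iSup_le fun x => ?_
  calc ENNReal.ofReal |(φ + ψ) x| ≤ ENNReal.ofReal (|φ x| + |ψ x|) :=
        ENNReal.ofReal_le_ofReal (abs_add_le (φ x) (ψ x))
    _ = ENNReal.ofReal |φ x| + ENNReal.ofReal |ψ x| :=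
        ENNReal.ofReal_add (abs_nonneg _) (abs_nonneg _)
    _ ≤ snorm φ + snorm ψ :=
        add_le_add (le_iSup (fun x => ENNReal.ofReal |φ x|) x)
          (le_iSup (fun x => ENNReal.ofReal |ψ x|) x)

lemma snorm_smul_le {n : ℕ} (c : ℝ) (φ : Cochain G n) :
    snorm (c • φ) ≤ ENNReal.ofReal |c| * snorm φ := by
  refine iSup_le fun x => ?_
  have h : |(c • φ) x| = |c| * |φ x| := by simp [abs_mul]
  rw [h, ENNReal.ofReal_mul (abs_nonneg c)]
  exact mul_le_mul_right (le_iSup (fun x => ENNReal.ofReal |φ x|) x) _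

lemma gnorm_le_snorm {n : ℕ} (z : Zb G n) : gnorm (mkH z) ≤ snorm (z : Cochain G n) :=
  sInf_le ⟨z, rfl, rfl⟩

lemma gnorm_zero {n : ℕ} : gnorm (0 : Hb G n) = 0 := by
  refine le_antisymm ?_ zero_le
  have h := gnorm_le_snorm (0 : Zb G n)
  rw [mkH_zero] at h
  simpa [snorm_zero] using h

lemma exists_gnorm_rep {n : ℕ} {α : Hb G n} (h : gnorm α = 0) {ε : ℝ≥0∞} (hε : 0 < ε) :
    ∃ z : Zb G n, mkH z = α ∧ snorm (z : Cochain G n) < ε := by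
  have h2 : gnorm α < ε := by rw [h]; exact hε
  rw [gnorm] at h2
  obtain ⟨r, ⟨z, hz, hr⟩, hlt⟩ := sInf_lt_iff.mp h2
  exact ⟨z, hz, hr ▸ hlt⟩

variable (G)

/-- The subspace of classes with vanishing Gromov seminorm. -/
noncomputable def NG (n : ℕ) : Submodule ℝ (Hb G n) where
  carrier := {α | gnorm α = 0}
  zero_mem' := gnorm_zero
  add_mem' := by
    intro a b ha hb
    show gnorm (a + b) = 0
    refine le_antisymm ?_ zero_le
    refine ENNReal.le_of_forall_pos_le_add fun ε hε _ => ?_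
    have hε2 : (0 : ℝ≥0∞) < (ε : ℝ≥0∞) / 2 :=
      ENNReal.half_pos (by exact_mod_cast hε.ne')
    obtain ⟨z₁, h₁, s₁⟩ := exists_gnorm_rep ha hε2
    obtain ⟨z₂, h₂, s₂⟩ := exists_gnorm_rep hb hε2
    have hmk : mkH (z₁ + z₂) = a + b := by rw [mkH_add, h₁, h₂]
    calc gnorm (a + b) ≤ snorm ((z₁ + z₂ : Zb G n) : Cochain G n) := hmk ▸ gnorm_le_snorm _
      _ = snorm ((z₁ : Cochain G n) + (z₂ : Cochain G n)) := by rw [Submodule.coe_add]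
      _ ≤ snorm (z₁ : Cochain G n) + snorm (z₂ : Cochain G n) := snorm_add_le _ _
      _ ≤ (ε : ℝ≥0∞) / 2 + (ε : ℝ≥0∞) / 2 := add_le_add s₁.le s₂.le
      _ = (ε : ℝ≥0∞) := ENNReal.add_halves _
      _ ≤ 0 + ε := by rw [zero_add]
  smul_mem' := by
    intro c a ha
    show gnorm (c • a) = 0
    by_cases hc : c = 0
    · subst hc
      rw [zero_smul]
      exact gnorm_zero
    refine le_antisymm ?_ zero_le
    refine ENNReal.le_of_forall_pos_le_add fun ε hε _ => ?_
    have hM0 : ENNReal.ofReal |c| ≠ 0 := by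
      rw [Ne, ENNReal.ofReal_eq_zero, not_le]
      exact abs_pos.mpr hc
    have hMt : ENNReal.ofReal |c| ≠ ⊤ := ENNReal.ofReal_ne_top
    have hδ : (0 : ℝ≥0∞) < (ε : ℝ≥0∞) / ENNReal.ofReal |c| :=
      ENNReal.div_pos (by exact_mod_cast hε.ne') hMt
    obtain ⟨z, hz, hs⟩ := exists_gnorm_rep ha hδ
    have hmk : mkH (c • z) = c • a := by rw [mkH_smul, hz]
    calc gnorm (c • a) ≤ snorm ((c • z : Zb G n) : Cochain G n) := hmk ▸ gnorm_le_snorm _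
      _ = snorm (c • (z : Cochain G n)) := by rw [Submodule.coe_smul]
      _ ≤ ENNReal.ofReal |c| * snorm (z : Cochain G n) := snorm_smul_le c _
      _ ≤ ENNReal.ofReal |c| * ((ε : ℝ≥0∞) / ENNReal.ofReal |c|) := mul_le_mul_right hs.le _
      _ = (ε : ℝ≥0∞) := ENNReal.mul_div_cancel hM0 hMt
      _ ≤ 0 + ε := by rw [zero_add]

variable {G}

/-- Having an invariant (possibly unbounded) primitive (with the convention `C^{-1} = 0`). -/
def HasInvPrimitive : ∀ {n : ℕ}, Cochain G n → Prop
  | 0, ψ => ψ = 0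
  | n + 1, ψ => ∃ φ : Cochain G n, IsInvariant φ ∧ delta φ = ψ

/-- A bounded cohomology class is exact if it lies in the kernel of the comparison map, i.e. if
it is represented by the coboundary of an invariant (possibly unbounded) cochain. -/
def IsExact {n : ℕ} (α : Hb G n) : Prop :=
  ∃ z : Zb G n, mkH z = α ∧ HasInvPrimitive (z : Cochain G n)

/-- Values `‖δφ‖_∞` over invariant primitives `φ` of representatives of `α` vanishing on
`S^{n}` (with the convention `C^{-1} = 0` in degree `0`). -/
def bahSet : ∀ {n : ℕ}, Set G → Hb G n → Set ℝ≥0∞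
  | 0, _, α => {r | α = 0 ∧ r = 0}
  | n + 1, S, α =>
      {r | ∃ φ : Cochain G n, IsInvariant φ ∧
        (∀ x : Fin (n + 1) → G, (∀ i, x i ∈ S) → φ x = 0) ∧
        (∃ z : Zb G (n + 1), (z : Cochain G (n + 1)) = delta φ ∧ mkH z = α) ∧
        snorm (delta φ) = r}

/-- The seminorm `‖α‖_S`. -/
noncomputable def normS {n : ℕ} (S : Set G) (α : Hb G n) : ℝ≥0∞ :=
  sInf (bahSet S α)

/-- The seminorm `‖α‖_bah = sup_S ‖α‖_S`, the supremum running over all finite `S ⊆ G`. -/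
noncomputable def bah {n : ℕ} (α : Hb G n) : ℝ≥0∞ :=
  ⨆ S : Finset G, normS (S : Set G) α

lemma normS_le {n : ℕ} {S : Set G} {α : Hb G (n + 1)} {φ : Cochain G n}
    (h1 : IsInvariant φ) (h2 : ∀ x : Fin (n + 1) → G, (∀ i, x i ∈ S) → φ x = 0)
    (h3 : ∃ z : Zb G (n + 1), (z : Cochain G (n + 1)) = delta φ ∧ mkH z = α) :
    normS S α ≤ snorm (delta φ) :=
  sInf_le ⟨φ, h1, h2, h3, rfl⟩

lemma normS_le_bah {n : ℕ} (S : Finset G) (α : Hb G n) : normS (S : Set G) α ≤ bah α :=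
  le_iSup (fun S : Finset G => normS (S : Set G) α) S

lemma bah_zero : ∀ {n : ℕ}, bah (0 : Hb G n) = 0 := by
  intro n
  refine le_antisymm (iSup_le fun S => ?_) zero_le
  cases n with
  | zero =>
      refine le_trans (sInf_le ?_) le_rfl
      exact ⟨rfl, rfl⟩
  | succ n =>
      have h := normS_le (α := (0 : Hb G (n + 1))) (S := (S : Set G))
        (φ := (0 : Cochain G n)) IsInvariant.zero (fun x _ => rfl)
        ⟨0, by rw [ZeroMemClass.coe_zero, map_zero], map_zero _⟩
      rw [map_zero, snorm_zero] at h
      exact h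

lemma eq_zero_of_bah_zero₀ {α : Hb G 0} (h : bah α = 0) : α = 0 := by
  by_contra hα
  have hS : normS ((∅ : Finset G) : Set G) α = ⊤ := by
    rw [normS]
    rw [sInf_eq_top]
    intro r hr
    simp only [bahSet, Set.mem_setOf_eq] at hr
    exact absurd hr.1 hα
  have := normS_le_bah (∅ : Finset G) α
  rw [hS, h] at this
  exact absurd (top_le_iff.mp this).symm (by simp)

lemma normS_eq_zero_of_bah {n : ℕ} {α : Hb G n} (h : bah α = 0) (S : Finset G) :
    normS (S : Set G) α = 0 :=
  le_antisymm (h ▸ normS_le_bah S α) zero_le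

lemma exists_bah_rep {n : ℕ} {α : Hb G (n + 1)} (h : bah α = 0) (S : Finset G)
    {ε : ℝ≥0∞} (hε : 0 < ε) :
    ∃ φ : Cochain G n, IsInvariant φ ∧
      (∀ x : Fin (n + 1) → G, (∀ i, x i ∈ (S : Set G)) → φ x = 0) ∧
      (∃ z : Zb G (n + 1), (z : Cochain G (n + 1)) = delta φ ∧ mkH z = α) ∧
      snorm (delta φ) < ε := by
  have h2 : normS ((S : Set G)) α < ε := by
    rw [normS_eq_zero_of_bah h S]; exact hε
  rw [normS] at h2
  obtain ⟨r, hr, hlt⟩ := sInf_lt_iff.mp h2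
  obtain ⟨φ, h1, h2', h3, h4⟩ := hr
  exact ⟨φ, h1, h2', h3, h4 ▸ hlt⟩

variable (G)

/-- The subspace `N^n_0` of exact classes with vanishing `‖·‖_bah`-seminorm. -/
noncomputable def N0 (n : ℕ) : Submodule ℝ (Hb G n) where
  carrier := {α | bah α = 0}
  zero_mem' := bah_zero
  add_mem' := by
    intro a b ha hb
    show bah (a + b) = 0
    cases n with
    | zero =>
        rw [eq_zero_of_bah_zero₀ ha, eq_zero_of_bah_zero₀ hb, add_zero]
        exact bah_zero
    | succ n =>
        refine le_antisymm (iSup_le fun S => ?_) zero_le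
        refine ENNReal.le_of_forall_pos_le_add fun ε hε _ => ?_
        have hε2 : (0 : ℝ≥0∞) < (ε : ℝ≥0∞) / 2 :=
          ENNReal.half_pos (by exact_mod_cast hε.ne')
        obtain ⟨φ₁, i₁, v₁, ⟨z₁, hz₁, hm₁⟩, s₁⟩ := exists_bah_rep ha S hε2
        obtain ⟨φ₂, i₂, v₂, ⟨z₂, hz₂, hm₂⟩, s₂⟩ := exists_bah_rep hb S hε2
        have hsum : normS (S : Set G) (a + b) ≤ snorm (delta (φ₁ + φ₂)) := by
          refine normS_le (i₁.add i₂) (fun x hx => ?_) ⟨z₁ + z₂, ?_, ?_⟩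
          · simp only [Pi.add_apply, v₁ x hx, v₂ x hx, add_zero]
          · rw [Submodule.coe_add, hz₁, hz₂, map_add]
          · rw [mkH_add, hm₁, hm₂]
        refine hsum.trans ?_
        calc snorm (delta (φ₁ + φ₂)) = snorm (delta φ₁ + delta φ₂) := by rw [map_add]
          _ ≤ snorm (delta φ₁) + snorm (delta φ₂) := snorm_add_le _ _
          _ ≤ (ε : ℝ≥0∞) / 2 + (ε : ℝ≥0∞) / 2 := add_le_add s₁.le s₂.le
          _ = (ε : ℝ≥0∞) := ENNReal.add_halves _
          _ ≤ 0 + ε := by rw [zero_add]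
  smul_mem' := by
    intro c a ha
    show bah (c • a) = 0
    by_cases hc : c = 0
    · subst hc
      rw [zero_smul]
      exact bah_zero
    cases n with
    | zero =>
        rw [eq_zero_of_bah_zero₀ ha, smul_zero]
        exact bah_zero
    | succ n =>
        refine le_antisymm (iSup_le fun S => ?_) zero_le
        refine ENNReal.le_of_forall_pos_le_add fun ε hε _ => ?_
        have hM0 : ENNReal.ofReal |c| ≠ 0 := by
          rw [Ne, ENNReal.ofReal_eq_zero, not_le]
          exact abs_pos.mpr hc
        have hMt : ENNReal.ofReal |c| ≠ ⊤ := ENNReal.ofReal_ne_top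
        have hδ : (0 : ℝ≥0∞) < (ε : ℝ≥0∞) / ENNReal.ofReal |c| :=
          ENNReal.div_pos (by exact_mod_cast hε.ne') hMt
        obtain ⟨φ, hi, hv, ⟨z, hz, hm⟩, hs⟩ := exists_bah_rep ha S hδ
        have hle : normS (S : Set G) (c • a) ≤ snorm (delta (c • φ)) := by
          refine normS_le (hi.smul c) (fun x hx => ?_) ⟨c • z, ?_, ?_⟩
          · simp only [Pi.smul_apply, hv x hx, smul_zero]
          · rw [Submodule.coe_smul, hz, map_smul]
          · rw [mkH_smul, hm]
        refine hle.trans ?_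
        calc snorm (delta (c • φ)) = snorm (c • delta φ) := by rw [map_smul]
          _ ≤ ENNReal.ofReal |c| * snorm (delta φ) := snorm_smul_le c _
          _ ≤ ENNReal.ofReal |c| * ((ε : ℝ≥0∞) / ENNReal.ofReal |c|) :=
              mul_le_mul_right hs.le _
          _ = (ε : ℝ≥0∞) := ENNReal.mul_div_cancel hM0 hMt
          _ ≤ 0 + ε := by rw [zero_add]

variable {G}
variable {G' : Type*} [Group G']

/-- Pullback of cochains along a group homomorphism. -/
def pull (ψ : G →* G') {n : ℕ} (φ : Cochain G' n) : Cochain G n :=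
  fun x => φ fun i => ψ (x i)

lemma delta_pull (ψ : G →* G') {n : ℕ} (φ : Cochain G' n) :
    delta (pull ψ φ) = pull ψ (delta φ) := rfl

lemma IsBoundedC.pull {ψ : G →* G'} {n : ℕ} {φ : Cochain G' n} :
    IsBoundedC φ → IsBoundedC (BddCoh.pull ψ φ)
  | ⟨C, hC⟩ => ⟨C, fun x => hC _⟩

lemma IsInvariant.pull {ψ : G →* G'} {n : ℕ} {φ : Cochain G' n} (h : IsInvariant φ) :
    IsInvariant (BddCoh.pull ψ φ) := by
  intro g x
  show φ (fun i => ψ (g * x i)) = φ (fun i => ψ (x i))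
  have he : (fun i => ψ (g * x i)) = fun i => ψ g * ψ (x i) :=
    funext fun i => map_mul ψ _ _
  rw [he]
  exact h (ψ g) _

/-- Pullback on bounded invariant cocycles. -/
noncomputable def pullZ (ψ : G →* G') (n : ℕ) : Zb G' n →ₗ[ℝ] Zb G n where
  toFun z := ⟨pull ψ (z : Cochain G' n), by
    obtain ⟨hb, hi, hd⟩ := z.2
    refine ⟨hb.pull, hi.pull, ?_⟩
    rw [delta_pull, hd]
    rfl⟩
  map_add' z w := Subtype.ext rfl
  map_smul' c z := Subtype.ext rfl

lemma pullZ_mem_Bb (ψ : G →* G') :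
    ∀ {n : ℕ} (z : Zb G' n), z ∈ Bb G' n → pullZ ψ n z ∈ Bb G n
  | 0, z, hz => by
      show pull ψ (z : Cochain G' 0) = 0
      rw [show (z : Cochain G' 0) = 0 from hz]
      rfl
  | n + 1, z, ⟨φ, h1, h2, h3⟩ =>
      ⟨pull ψ φ, h1.pull, h2.pull, by rw [delta_pull, h3]; rfl⟩

/-- The map induced on bounded cohomology by a group homomorphism. -/
noncomputable def Hbpull (ψ : G →* G') (n : ℕ) : Hb G' n →ₗ[ℝ] Hb G n :=
  Submodule.mapQ (Bb G' n) (Bb G n) (pullZ ψ n) fun z hz => pullZ_mem_Bb ψ z hz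


/-- The bounded real-valued functions on a type, as a submodule of all functions. -/
def BddFun (K : Type*) : Submodule ℝ (K → ℝ) where
  carrier := {f | ∃ C : ℝ, ∀ x, |f x| ≤ C}
  add_mem' := by
    rintro f g ⟨C, hC⟩ ⟨D, hD⟩
    exact ⟨C + D, fun x => (abs_add_le (f x) (g x)).trans (add_le_add (hC x) (hD x))⟩
  zero_mem' := ⟨0, fun x => by simp⟩
  smul_mem' := by
    rintro c f ⟨C, hC⟩
    refine ⟨|c| * C, fun x => ?_⟩
    have h : |(c • f) x| = |c| * |f x| := by simp [abs_mul]
    rw [h]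
    exact mul_le_mul_of_nonneg_left (hC x) (abs_nonneg c)

/-- A group `K` is amenable: there is a normalized, positive, left-invariant linear functional
(an invariant mean) on the space of bounded real functions on `K`. -/
def IsAmenable (K : Type*) [Group K] : Prop :=
  ∃ m : BddFun K →ₗ[ℝ] ℝ,
    (∀ h1 : (fun _ : K => (1 : ℝ)) ∈ BddFun K, m ⟨fun _ => 1, h1⟩ = 1) ∧
    (∀ f : BddFun K, (∀ x, 0 ≤ (f : K → ℝ) x) → 0 ≤ m f) ∧
    (∀ (k : K) (f : BddFun K) (hf : (fun x => (f : K → ℝ) (k⁻¹ * x)) ∈ BddFun K),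
      m ⟨fun x => (f : K → ℝ) (k⁻¹ * x), hf⟩ = m f)

lemma comp_mem_bddFun {α β : Type*} {f : α → ℝ} (hf : f ∈ BddFun α) (g : β → α) :
    f ∘ g ∈ BddFun β :=
  let ⟨C, hC⟩ := hf
  ⟨C, fun x => hC (g x)⟩

lemma const_mem_bddFun {K : Type*} (c : ℝ) : (fun _ : K => c) ∈ BddFun K :=
  ⟨|c|, fun _ => le_rfl⟩

section InvariantMean

variable {K : Type*} [Group K] {μ : (K → ℝ) → ℝ}

/-- An invariant mean, extended arbitrarily to unbounded functions. -/
structure IsInvMean (μ : (K → ℝ) → ℝ) : Prop where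
  map_const (c : ℝ) : μ (fun _ => c) = c
  abs_le {f : K → ℝ} {C : ℝ} : (∀ x, |f x| ≤ C) → |μ f| ≤ C
  map_add {f g : K → ℝ} : f ∈ BddFun K → g ∈ BddFun K → μ (f + g) = μ f + μ g
  map_smul (c : ℝ) {f : K → ℝ} : f ∈ BddFun K → μ (c • f) = c * μ f
  map_mul_left (c : K) {f : K → ℝ} : f ∈ BddFun K → μ (fun x => f (c * x)) = μ f

lemma IsInvMean.map_sum {ι : Type*} (hμ : IsInvMean μ) (s : Finset ι) {f : ι → K → ℝ}
    (hf : ∀ i, f i ∈ BddFun K) : μ (∑ i ∈ s, f i) = ∑ i ∈ s, μ (f i) := by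
  classical
  induction s using Finset.induction with
  | empty =>
    rw [Finset.sum_empty, Finset.sum_empty]
    exact hμ.map_const 0
  | insert a s ha ih =>
    rw [Finset.sum_insert ha, Finset.sum_insert ha, hμ.map_add (hf a) (sum_mem fun i _ => hf i),
      ih]

theorem IsAmenable.exists_isInvMean (h : IsAmenable K) : ∃ μ : (K → ℝ) → ℝ, IsInvMean μ := by
  classical
  obtain ⟨m, hone, hpos, hinv⟩ := h
  have m_const (c : ℝ) : m ⟨_, const_mem_bddFun c⟩ = c := by
    have : (⟨_, const_mem_bddFun c⟩ : BddFun K) = c • ⟨_, const_mem_bddFun 1⟩ :=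
      Subtype.ext (funext fun _ => (mul_one c).symm)
    rw [this, map_smul, hone, smul_eq_mul, mul_one]
  have m_mono {f g : BddFun K} (hfg : ∀ x, (f : K → ℝ) x ≤ (g : K → ℝ) x) : m f ≤ m g := by
    have := hpos (g - f) fun x => sub_nonneg.2 (hfg x)
    rwa [map_sub, sub_nonneg] at this
  refine ⟨fun f => if hf : f ∈ BddFun K then m ⟨f, hf⟩ else 0, fun c => ?_, fun {f C} hC => ?_,
    fun {f g} hf hg => ?_, fun c f hf => ?_, fun c f hf => ?_⟩
  · simp only [dif_pos (const_mem_bddFun c), m_const]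
  · have hf : f ∈ BddFun K := ⟨C, hC⟩
    simp only [dif_pos hf, abs_le]
    constructor
    · simpa only [m_const] using
        m_mono (f := ⟨_, const_mem_bddFun (-C)⟩) (g := ⟨f, hf⟩) fun x => (abs_le.1 (hC x)).1
    · simpa only [m_const] using
        m_mono (f := ⟨f, hf⟩) (g := ⟨_, const_mem_bddFun C⟩) fun x => (abs_le.1 (hC x)).2
  · simp only [dif_pos hf, dif_pos hg, dif_pos (add_mem hf hg)]
    exact map_add m ⟨f, hf⟩ ⟨g, hg⟩
  · simp only [dif_pos hf, dif_pos (Submodule.smul_mem _ c hf)]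
    exact map_smul m c ⟨f, hf⟩
  · have hcf : (fun x => f (c * x)) ∈ BddFun K := comp_mem_bddFun hf (c * ·)
    have := hinv c⁻¹ ⟨f, hf⟩ (by simpa only [inv_inv] using hcf)
    simp only [inv_inv] at this
    simp only [dif_pos hf, dif_pos hcf, this]

noncomputable def piMean (μ : (K → ℝ) → ℝ) : (j : ℕ) → ((Fin j → K) → ℝ) → ℝ
  | 0, F => F Fin.elim0
  | j + 1, F => μ fun k₀ => piMean μ j fun k => F (Fin.cons k₀ k)

theorem IsInvMean.piMean (hμ : IsInvMean μ) : ∀ j, IsInvMean (piMean μ j)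
  | 0 => ⟨fun _ => rfl, fun hC => hC _, fun _ _ => rfl, fun _ _ _ => rfl,
      fun _ f _ => congrArg f (Subsingleton.elim _ _)⟩
  | j + 1 => by
    have ih := hμ.piMean j
    have slice_mem {F : (Fin (j + 1) → K) → ℝ} (hF : F ∈ BddFun _) :
        (fun k₀ => BddCoh.piMean μ j fun k => F (Fin.cons k₀ k)) ∈ BddFun K :=
      let ⟨C, hC⟩ := hF
      ⟨C, fun k₀ => ih.abs_le fun k => hC _⟩
    refine ⟨fun c => ?_, fun hC => hμ.abs_le fun k₀ => ih.abs_le fun k => hC _,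
      fun {F G} hF hG => ?_, fun c F hF => ?_, fun c F hF => ?_⟩
    · simp only [BddCoh.piMean, ih.map_const, hμ.map_const]
    · have := fun k₀ => ih.map_add (comp_mem_bddFun hF (Fin.cons k₀))
        (comp_mem_bddFun hG (Fin.cons k₀))
      simp only [BddCoh.piMean]
      exact (congrArg μ (funext this)).trans (hμ.map_add (slice_mem hF) (slice_mem hG))
    · have := fun k₀ => ih.map_smul c (comp_mem_bddFun hF (Fin.cons k₀))
      simp only [BddCoh.piMean]
      exact (congrArg μ (funext this)).trans (hμ.map_smul c (slice_mem hF))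
    · have cons_mul (k₀ : K) (k : Fin j → K) :
          c * Fin.cons k₀ k = Fin.cons (c 0 * k₀) (Fin.tail c * k) := by
        ext i
        refine Fin.cases ?_ (fun i => ?_) i <;> simp [Fin.tail]
      simp only [BddCoh.piMean, cons_mul]
      have := fun k₀ => ih.map_mul_left (Fin.tail c) (comp_mem_bddFun hF (Fin.cons (c 0 * k₀)))
      exact (congrArg μ (funext this)).trans (hμ.map_mul_left (c 0) (slice_mem hF))

theorem piMean_comp_succAbove (hμ : IsInvMean μ) :
    ∀ {j : ℕ} (F : (Fin j → K) → ℝ) (i : Fin (j + 1)),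
      piMean μ (j + 1) (fun k => F (k ∘ i.succAbove)) = piMean μ j F
  | j, F, i => by
    induction i using Fin.cases with
    | zero =>
      simp only [piMean, Fin.succAbove_zero, Fin.cons_comp_succ]
      exact hμ.map_const _
    | succ i =>
      match j, F, i with
      | j + 1, F, i =>
        simp only [piMean, Fin.cons_comp_succ_succAbove]
        exact congrArg μ <| funext fun k₀ =>
          piMean_comp_succAbove hμ (fun k => F (Fin.cons k₀ k)) i

end InvariantMean

section Transfer

variable {Γ Γ' : Type*} [Group Γ] [Group Γ'] (ψ : Γ →* Γ') (s : Γ' → Γ) {μ : (ψ.ker → ℝ) → ℝ}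

noncomputable def transfer (μ : (ψ.ker → ℝ) → ℝ) {n : ℕ} (φ : Cochain Γ n) : Cochain Γ' n :=
  fun y => piMean μ (n + 1) fun k => φ fun i => s (y i) * k i

variable {ψ s}

lemma transfer_pull (hs : ∀ y, ψ (s y) = y) (hμ : IsInvMean μ) {n : ℕ} (z : Cochain Γ' n) :
    transfer ψ s μ (pull ψ z) = z := by
  funext y
  have lift (k : Fin (n + 1) → ψ.ker) : (fun i => ψ (s (y i) * k i)) = y := by
    funext i
    rw [map_mul, hs, (k i).2, mul_one]
  simp only [transfer, pull, lift]
  exact (hμ.piMean _).map_const _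

lemma IsBoundedC.transfer (hμ : IsInvMean μ) {n : ℕ} {φ : Cochain Γ n} :
    IsBoundedC φ → IsBoundedC (transfer ψ s μ φ)
  | ⟨C, hC⟩ => ⟨C, fun _ => (hμ.piMean _).abs_le fun _ => hC _⟩

lemma IsInvariant.transfer (hs : ∀ y, ψ (s y) = y) (hμ : IsInvMean μ) {n : ℕ}
    {φ : Cochain Γ n} (hb : IsBoundedC φ) (hi : IsInvariant φ) :
    IsInvariant (transfer ψ s μ φ) := by
  intro g y
  have lift_mem (i : Fin (n + 1)) : (s g * s (y i))⁻¹ * s (g * y i) ∈ ψ.ker := by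
    rw [MonoidHom.mem_ker, map_mul, map_inv, map_mul, hs, hs, hs, inv_mul_cancel]
  let c : Fin (n + 1) → ψ.ker := fun i => ⟨_, lift_mem i⟩
  have relift (k : Fin (n + 1) → ψ.ker) :
      φ (fun i => s (g * y i) * k i) = φ (fun i => s (y i) * (c * k) i) := by
    refine (congrArg φ (funext fun i => ?_)).trans (hi (s g) _)
    simp only [c, Pi.mul_apply, Subgroup.coe_mul]
    group
  calc BddCoh.transfer ψ s μ φ (fun i => g * y i)
      = piMean μ (n + 1) (fun k => φ (fun i => s (y i) * (c * k) i)) :=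
        congrArg _ (funext relift)
    _ = BddCoh.transfer ψ s μ φ y := (hμ.piMean _).map_mul_left c
        (comp_mem_bddFun hb fun (k : Fin (n + 1) → ψ.ker) i => s (y i) * k i)

lemma delta_transfer (hμ : IsInvMean μ) {n : ℕ} {φ : Cochain Γ n} (hb : IsBoundedC φ) :
    delta (transfer ψ s μ φ) = transfer ψ s μ (delta φ) := by
  funext y
  let G (i : Fin (n + 2)) (k : Fin (n + 2) → ψ.ker) : ℝ :=
    φ fun j => s (y (i.succAbove j)) * k (i.succAbove j)
  have hG (i : Fin (n + 2)) : G i ∈ BddFun _ := comp_mem_bddFun hb _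
  calc delta (transfer ψ s μ φ) y
      = ∑ i : Fin (n + 2), (-1 : ℝ) ^ (i : ℕ) * transfer ψ s μ φ (fun j => y (i.succAbove j)) :=
        rfl
    _ = ∑ i : Fin (n + 2), (-1 : ℝ) ^ (i : ℕ) * piMean μ (n + 2) (G i) :=
        Finset.sum_congr rfl fun i _ => congrArg _
          (piMean_comp_succAbove hμ (fun k => φ fun j => s (y (i.succAbove j)) * k j) i).symm
    _ = ∑ i : Fin (n + 2), piMean μ (n + 2) ((-1 : ℝ) ^ (i : ℕ) • G i) :=
        Finset.sum_congr rfl fun i _ => ((hμ.piMean _).map_smul _ (hG i)).symm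
    _ = piMean μ (n + 2) (∑ i : Fin (n + 2), (-1 : ℝ) ^ (i : ℕ) • G i) :=
        ((hμ.piMean _).map_sum _ fun i => Submodule.smul_mem _ _ (hG i)).symm
    _ = transfer ψ s μ (delta φ) y := by
        congr 1
        funext k
        simp only [Finset.sum_apply, Pi.smul_apply, smul_eq_mul, G]
        rfl

lemma IsCobdry.of_pull (hs : ∀ y, ψ (s y) = y) (hμ : IsInvMean μ) :
    ∀ {n : ℕ} {z : Cochain Γ' n}, IsCobdry (pull ψ z) → IsCobdry z
  | 0, z, h => by
    show z = 0
    rw [← transfer_pull hs hμ z, show pull ψ z = pull ψ 0 from h, transfer_pull hs hμ]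
  | _ + 1, z, ⟨φ, hb, hi, hδ⟩ =>
    ⟨transfer ψ s μ φ, hb.transfer hμ, hi.transfer hs hμ hb,
      by rw [delta_transfer hμ hb, hδ, transfer_pull hs hμ]⟩

end Transfer

section Pullback

variable {Γ Γ' : Type*} [Group Γ] [Group Γ'] (ψ : Γ →* Γ')

lemma snorm_pull_le {n : ℕ} (φ : Cochain Γ' n) : snorm (pull ψ φ) ≤ snorm φ :=
  iSup_le fun x => le_iSup (fun y => ENNReal.ofReal |φ y|) (fun i => ψ (x i))

lemma Hbpull_mkH {n : ℕ} (z : Zb Γ' n) : Hbpull ψ n (mkH z) = mkH (pullZ ψ n z) := rfl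

lemma normS_Hbpull_le {n : ℕ} (S : Set Γ) (α : Hb Γ' n) :
    normS S (Hbpull ψ n α) ≤ normS (ψ '' S) α := by
  refine le_sInf fun r hr => ?_
  cases n with
  | zero =>
    obtain ⟨rfl, rfl⟩ := hr
    exact sInf_le ⟨map_zero _, rfl⟩
  | succ n =>
    obtain ⟨φ, hi, hvan, ⟨z, hz, rfl⟩, rfl⟩ := hr
    calc normS S (Hbpull ψ _ (mkH z)) ≤ snorm (delta (pull ψ φ)) :=
          normS_le hi.pull (fun x hx => hvan _ fun i => Set.mem_image_of_mem ψ (hx i))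
            ⟨pullZ ψ _ z, by rw [delta_pull, ← hz]; rfl, (Hbpull_mkH ψ z).symm⟩
      _ ≤ snorm (delta φ) := snorm_pull_le ψ _

lemma bah_Hbpull_le {n : ℕ} (α : Hb Γ' n) : bah (Hbpull ψ n α) ≤ bah α := by
  classical
  refine iSup_le fun S => (normS_Hbpull_le ψ S α).trans ?_
  simpa only [Finset.coe_image] using normS_le_bah (S.image ψ) α

lemma Hbpull_mem_N0 {n : ℕ} {α : Hb Γ' n} (hα : α ∈ N0 Γ' n) : Hbpull ψ n α ∈ N0 Γ n :=
  le_antisymm ((bah_Hbpull_le ψ α).trans_eq hα) zero_le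

theorem Hbpull_injective (hsurj : Function.Surjective ψ) (hamen : IsAmenable ψ.ker) (n : ℕ) :
    Function.Injective (Hbpull ψ n) := by
  obtain ⟨μ, hμ⟩ := hamen.exists_isInvMean
  refine (injective_iff_map_eq_zero _).2 fun γ hγ => ?_
  obtain ⟨z, rfl⟩ := Submodule.mkQ_surjective _ γ
  rw [Hbpull_mkH] at hγ
  have hcob : IsCobdry (pull ψ (z : Cochain Γ' n)) := (Submodule.Quotient.mk_eq_zero _).1 hγ
  exact (Submodule.Quotient.mk_eq_zero _).2 (hcob.of_pull (Function.surjInv_eq hsurj) hμ)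

end Pullback

end BddCoh

open BddCoh

theorem N0_inj_of_surj_amenable_ker_general (Γ Γ' : Type*) [Group Γ] [Group Γ']
    (ψ : Γ →* Γ') (hsurj : Function.Surjective ψ) (hamen : IsAmenable ψ.ker)
    (n : ℕ) :
    (∀ α ∈ N0 Γ' n, Hbpull ψ n α ∈ N0 Γ n) ∧
      Set.InjOn (Hbpull ψ n) (N0 Γ' n : Set (Hb Γ' n)) :=
  ⟨fun _ => Hbpull_mem_N0 ψ, (Hbpull_injective ψ hsurj hamen n).injOn⟩

/-- If `ψ : Γ → Γ'` is a surjective homomorphism with amenable kernel, then for every `n ≥ 1`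
the induced map in bounded cohomology carries `N^n_0(Γ')` into `N^n_0(Γ)` and restricts to an
injection `N^n_0(Γ') ↪ N^n_0(Γ)`. -/
theorem N0_inj_of_surj_amenable_ker (Γ Γ' : Type*) [Group Γ] [Group Γ']
    (ψ : Γ →* Γ') (hsurj : Function.Surjective ψ) (hamen : IsAmenable ψ.ker)
    (n : ℕ) (hn : 1 ≤ n) :
    (∀ α ∈ N0 Γ' n, Hbpull ψ n α ∈ N0 Γ n) ∧
      Set.InjOn (Hbpull ψ n) (N0 Γ' n : Set (Hb Γ' n)) :=
  N0_inj_of_surj_amenable_ker_general Γ Γ' ψ hsurj hamen n
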